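/- Let b ≥ 2 be an integer and k an integer with 1 ≤ k ≤ b − 1. There is no finite set S of primes and no infinite strictly increasing sequence (n_i) such that every number k·(b^{n_i} − 1)/(b−1) has all its prime factors in S. -/

import Mathlib

/-!
By lifting the exponent, for every prime `p` the `p`-part of `k * (b ^ n - 1) / (b - 1)` is at
most `K_p * n`. If all these numbers were `S`-smooth along an unbounded sequence of `n`, they would
be bounded by `(∏_{p ∈ S} K_p) * n ^ #S`, contradicting their exponential growth `≥ b ^ (n - 1)`.
-/

open Finset Filter

namespace Nat

lemma ordProj_pow_sub_one_of_odd {p x n : ℕ} (hp : p.Prime) (hp_odd : Odd p) (hx : 1 < x)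
    (hpx : p ∣ x - 1) (hn : n ≠ 0) :
    ordProj[p] (x ^ n - 1) = ordProj[p] (x - 1) * ordProj[p] n := by
  have : Fact p.Prime := ⟨hp⟩
  have hpx' : ¬p ∣ x := fun h ↦ hp.one_lt.ne' <| (Nat.dvd_one).1 <| by
    simpa [Nat.sub_sub_self hx.le] using Nat.dvd_sub h hpx
  simp only [factorization_def _ hp, ← pow_add]
  simpa using congrArg (p ^ ·) (padicValNat.pow_sub_pow hp_odd hx (by simpa using hpx) hpx' hn)

lemma ordProj_two_pow_sub_one_mul_two {x n : ℕ} (hx : 1 < x) (hx_odd : Odd x) (hn : n ≠ 0)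
    (hn_even : Even n) :
    ordProj[2] (x ^ n - 1) * 2 = ordProj[2] (x + 1) * ordProj[2] (x - 1) * ordProj[2] n := by
  simp only [factorization_def _ prime_two, ← pow_succ, ← pow_add]
  rw [padicValNat.pow_two_sub_one hx (by simpa [← even_iff_two_dvd] using hx_odd) hn hn_even]

/-- For `p ∤ b`, `b ^ n - 1` divides `(b ^ e) ^ n - 1` where `p ∣ b ^ e - 1` (`e = 2` for `p = 2`,
`e = p - 1` otherwise, by Fermat), and lifting the exponent computes the `p`-part of the latter. -/
lemma exists_ordProj_pow_sub_one_le {p b : ℕ} (hp : p.Prime) (hb : 2 ≤ b) :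
    ∃ K, ∀ n ≠ 0, ordProj[p] (b ^ n - 1) ≤ K * n := by
  by_cases hpb : p ∣ b
  · refine ⟨1, fun n hn ↦ ?_⟩
    have hpb' : ¬p ∣ b ^ n - 1 := fun h ↦ hp.one_lt.ne' <| (Nat.dvd_one).1 <| by
      simpa [Nat.sub_sub_self (one_le_pow n b (by omega))] using
        Nat.dvd_sub (hpb.trans (dvd_pow_self b hn)) h
    simp [factorization_eq_zero_of_not_dvd hpb', one_le_iff_ne_zero.2 hn]
  rcases hp.eq_two_or_odd' with rfl | hp_odd
  · refine ⟨(b + 1) * (b - 1), fun n hn ↦ ?_⟩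
    have hb_odd : Odd b := by simpa [← even_iff_two_dvd] using hpb
    have hdvd : b ^ n - 1 ∣ b ^ (2 * n) - 1 := pow_sub_one_dvd_pow_sub_one b (dvd_mul_left n 2)
    have hpos : b ^ (2 * n) - 1 ≠ 0 := by
      have := one_lt_pow (by omega : 2 * n ≠ 0) (by omega : 1 < b); omega
    have hlte := ordProj_two_pow_sub_one_mul_two (by omega) hb_odd (by omega) (even_two_mul n)
    have h₁ := ordProj_le 2 (by omega : b + 1 ≠ 0)
    have h₂ := ordProj_le 2 (by omega : b - 1 ≠ 0)
    have h₃ := ordProj_le 2 (by omega : 2 * n ≠ 0)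
    calc ordProj[2] (b ^ n - 1) ≤ ordProj[2] (b ^ (2 * n) - 1) :=
          le_of_dvd (ordProj_pos _ 2) (ordProj_dvd_ordProj_of_dvd hpos hdvd 2)
      _ ≤ (b + 1) * (b - 1) * n := by
          have := hlte ▸ Nat.mul_le_mul (Nat.mul_le_mul h₁ h₂) h₃
          nlinarith
  · refine ⟨b ^ (p - 1) - 1, fun n hn ↦ ?_⟩
    have hb_pow : 1 < b ^ (p - 1) := one_lt_pow (by have := hp.two_le; omega) (by omega)
    have hfermat : p ∣ b ^ (p - 1) - 1 := dvd_of_mod_eq_zero <|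
      pow_card_sub_one_sub_one_mod_card hp (coprime_comm.1 (hp.coprime_iff_not_dvd.2 hpb))
    have hdvd : b ^ n - 1 ∣ (b ^ (p - 1)) ^ n - 1 := by
      rw [← pow_mul]; exact pow_sub_one_dvd_pow_sub_one b (dvd_mul_left n _)
    have hpos : (b ^ (p - 1)) ^ n - 1 ≠ 0 := by
      have := one_lt_pow hn hb_pow; omega
    calc ordProj[p] (b ^ n - 1) ≤ ordProj[p] ((b ^ (p - 1)) ^ n - 1) :=
          le_of_dvd (ordProj_pos _ p) (ordProj_dvd_ordProj_of_dvd hpos hdvd p)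
      _ = ordProj[p] (b ^ (p - 1) - 1) * ordProj[p] n :=
          ordProj_pow_sub_one_of_odd hp hp_odd hb_pow hfermat hn
      _ ≤ (b ^ (p - 1) - 1) * n :=
          Nat.mul_le_mul (ordProj_le p (by omega)) (ordProj_le p hn)

lemma exists_ordProj_mul_geomSum_le {p b k : ℕ} (hp : p.Prime) (hb : 2 ≤ b) (hk : k ≠ 0) :
    ∃ K, ∀ n ≠ 0, ordProj[p] (k * ∑ j ∈ range n, b ^ j) ≤ K * n := by
  obtain ⟨K, hK⟩ := exists_ordProj_pow_sub_one_le hp hb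
  refine ⟨k * K, fun n hn ↦ ?_⟩
  have hpos : b ^ n - 1 ≠ 0 := by have := one_lt_pow hn (by omega : 1 < b); omega
  have hdvd : k * ∑ j ∈ range n, b ^ j ∣ k * (b ^ n - 1) :=
    mul_dvd_mul_left k (geomSum_eq hb n ▸ div_dvd_of_dvd (sub_one_dvd_pow_sub_one b n))
  calc ordProj[p] (k * ∑ j ∈ range n, b ^ j) ≤ ordProj[p] (k * (b ^ n - 1)) :=
        le_of_dvd (ordProj_pos _ p) (ordProj_dvd_ordProj_of_dvd (mul_ne_zero hk hpos) hdvd p)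
    _ = ordProj[p] k * ordProj[p] (b ^ n - 1) := ordProj_mul p hk hpos
    _ ≤ k * K * n := by rw [mul_assoc]; exact Nat.mul_le_mul (ordProj_le p hk) (hK n hn)

lemma pow_le_mul_geomSum (b : ℕ) {n : ℕ} (hn : n ≠ 0) : b ^ n ≤ b * ∑ j ∈ range n, b ^ j :=
  calc b ^ n = b * b ^ (n - 1) := (mul_pow_sub_one hn b).symm
    _ ≤ b * ∑ j ∈ range n, b ^ j := Nat.mul_le_mul_left b <|
        single_le_sum (fun j _ ↦ Nat.zero_le (b ^ j)) (mem_range.2 (by omega : n - 1 < n))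

lemma le_prod_of_primeFactors_subset {N : ℕ} {S : Finset ℕ} {f : ℕ → ℕ} (hN : N ≠ 0)
    (hS : N.primeFactors ⊆ S) (hf : ∀ p ∈ S, ordProj[p] N ≤ f p) : N ≤ ∏ p ∈ S, f p :=
  calc N = ∏ p ∈ S, ordProj[p] N := by
        rw [← Finsupp.prod_of_support_subset _ (support_factorization N ▸ hS) (· ^ ·)
          (fun _ _ ↦ pow_zero _), prod_factorization_pow_eq_self hN]
    _ ≤ ∏ p ∈ S, f p := prod_le_prod' hf

lemma eventually_mul_pow_lt_pow {r : ℕ} (hr : 1 < r) (C s : ℕ) :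
    ∀ᶠ m in atTop, C * m ^ s < r ^ m := by
  have hlim := (tendsto_pow_const_div_const_pow_of_one_lt s
    (by exact_mod_cast hr : (1 : ℝ) < r)).const_mul (C : ℝ)
  rw [mul_zero] at hlim
  filter_upwards [hlim.eventually (gt_mem_nhds one_pos)] with m hm
  have hr' : (0 : ℝ) < r ^ m := by positivity
  rw [mul_div_assoc', div_lt_one hr'] at hm
  exact_mod_cast hm

end Nat

theorem stmt_6_general (b k : ℕ) (hb : 2 ≤ b) (hk1 : 1 ≤ k) :
    ¬ ∃ (S : Finset ℕ) (n : ℕ → ℕ), (∀ p ∈ S, p.Prime) ∧ StrictMono n ∧ (∀ i, 0 < n i) ∧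
      ∀ i p, p.Prime → p ∣ (k * ∑ j ∈ Finset.range (n i), b ^ j) → p ∈ S := by
  rintro ⟨S, n, hS_prime, hn_mono, hn_pos, hS⟩
  choose! K hK using fun p hp ↦ Nat.exists_ordProj_mul_geomSum_le (hS_prime p hp) hb
    (by omega : k ≠ 0)
  obtain ⟨i, hi⟩ := (hn_mono.tendsto_atTop.eventually
    (Nat.eventually_mul_pow_lt_pow (by omega : 1 < b) (b * ∏ p ∈ S, K p) #S)).exists
  set m := n i
  set N := k * ∑ j ∈ range m, b ^ j
  have hm : m ≠ 0 := (hn_pos i).ne'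
  have hlower : b ^ m ≤ b * N := (Nat.pow_le_mul_geomSum b hm).trans
    (Nat.mul_le_mul_left b (Nat.le_mul_of_pos_left _ (by omega)))
  have hN : N ≠ 0 := fun h ↦ by
    rw [h, mul_zero] at hlower; exact (pow_pos (by omega) m).ne' (Nat.le_zero.1 hlower)
  have hupper : N ≤ (∏ p ∈ S, K p) * m ^ #S :=
    calc N ≤ ∏ p ∈ S, K p * m :=
          Nat.le_prod_of_primeFactors_subset hN
            (fun p hp ↦ hS i p (Nat.prime_of_mem_primeFactors hp) (Nat.dvd_of_mem_primeFactors hp))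
            fun p hp ↦ hK p hp m hm
      _ = (∏ p ∈ S, K p) * m ^ #S := by rw [prod_mul_distrib, prod_const]
  have := Nat.mul_le_mul_left b hupper
  rw [mul_assoc] at hi
  omega

theorem stmt_6 (b k : ℕ) (hb : 2 ≤ b) (hk1 : 1 ≤ k) (hkb : k ≤ b - 1) :
    ¬ ∃ (S : Finset ℕ) (n : ℕ → ℕ), (∀ p ∈ S, p.Prime) ∧ StrictMono n ∧ (∀ i, 0 < n i) ∧
      ∀ i p, p.Prime → p ∣ (k * ∑ j ∈ Finset.range (n i), b ^ j) → p ∈ S :=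
  stmt_6_general b k hb hk1
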